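/- arXiv:0811.0228 — 2 statements merged into one kernel-verified Lean document; each statement's English description precedes it below -/
import Mathlib

section
/- Existence and uniqueness of the downstream speed (Rankine–Hugoniot/Bernoulli system): Let γ > 1 and b₀ ∈ ℝ with 1 + (γ−1)b₀ > 0. For every u⁻ ∈ (c_*, u_max) there exists a unique u⁺ ∈ (0, c_*) such that ρ((u⁺)²)·u⁺ = ρ((u⁻)²)·u⁻ (conservation of mass across the shock; the Bernoulli law i(ρ⁺) + (u⁺)²/2 = i(ρ⁻) + (u⁻)²/2 = b₀ with ρ^± := ρ((u^±)²) holds automatically). Moreover u⁺ < c_* < u⁻ and the entropy condition ρ((u⁺)²) > ρ((u⁻)²) holds. -/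
noncomputable section

open Set

/-- Two-dimensional Euclidean space (cross-section plane). -/
abbrev E2 : Type := EuclideanSpace ℝ (Fin 2)
/-- Three-dimensional Euclidean space. -/
abbrev E3 : Type := EuclideanSpace ℝ (Fin 3)

/-- The last two coordinates of a point of `E3`. -/
def tl (x : E3) : E2 := WithLp.toLp 2 (fun i : Fin 2 => x i.succ)

/-- The point of `E3` with first coordinate `a` and remaining coordinates `y`. -/
def pt (a : ℝ) (y : E2) : E3 := WithLp.toLp 2 (Fin.cons a (fun j => y j) : Fin 3 → ℝ)

/-- The `i`-th standard basis vector of `E3`. -/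
def e3 (i : Fin 3) : E3 := EuclideanSpace.single i 1

/-- `s_max = 2(b₀ + 1/(γ-1))`, the supremum of admissible squared speeds. -/
def sMax (γ b₀ : ℝ) : ℝ := 2 * (b₀ + 1 / (γ - 1))

/-- `u_max = √s_max`, the maximal speed. -/
def uMax (γ b₀ : ℝ) : ℝ := Real.sqrt (sMax γ b₀)

/-- The density `ρ(s) = (1 + (γ-1)(b₀ - s/2))^{1/(γ-1)}` as a function of the squared speed. -/
def dens (γ b₀ s : ℝ) : ℝ := (1 + (γ - 1) * (b₀ - s / 2)) ^ ((1:ℝ) / (γ - 1))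

/-- The critical (sonic) speed `c_* = √(2(1+(γ-1)b₀)/(γ+1))`. -/
def cStar (γ b₀ : ℝ) : ℝ := Real.sqrt (2 * (1 + (γ - 1) * b₀) / (γ + 1))

/-- The squared sound speed `c(s)² = 1 + (γ-1)(b₀ - s/2)` as a function of squared speed. -/
def soundSq (γ b₀ s : ℝ) : ℝ := 1 + (γ - 1) * (b₀ - s / 2)

/-- The specific enthalpy `i(ρ) = (ρ^{γ-1} - 1)/(γ-1)`. -/
def enth (γ ρ : ℝ) : ℝ := (ρ ^ (γ - 1) - 1) / (γ - 1)

/-! The mass flux `u ↦ ρ(u²) u` has derivative `(c²)^{1/(γ-1) - 1} (c² - u²)`, where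
`c² = soundSq γ b₀ (u²)` is the squared sound speed, and `c² - u² = (γ+1)/2 (c_*² - u²)`.
So the flux increases strictly on `[0, c_*]` and decreases strictly on `[c_*, u_max)`. As it
vanishes at `0`, its value at `u⁻` lies strictly between its values at `0` and at `c_*`: the
intermediate value theorem gives `u⁺`, strict monotonicity its uniqueness. The entropy condition
holds because `ρ` is decreasing in the squared speed. -/

def flux (γ b₀ u : ℝ) : ℝ := dens γ b₀ (u ^ 2) * u

section

variable {γ b₀ : ℝ}

lemma soundSq_eq_mul_sMax_sub (hγ : 1 < γ) (s : ℝ) :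
    soundSq γ b₀ s = (γ - 1) / 2 * (sMax γ b₀ - s) := by
  have : γ - 1 ≠ 0 := by linarith
  unfold soundSq sMax
  field_simp
  ring

lemma soundSq_pos (hγ : 1 < γ) {s : ℝ} (hs : s < sMax γ b₀) : 0 < soundSq γ b₀ s := by
  rw [soundSq_eq_mul_sMax_sub hγ]
  have : 0 < γ - 1 := by linarith
  have : 0 < sMax γ b₀ - s := by linarith
  positivity

lemma sq_lt_sMax {u : ℝ} (hu₀ : 0 ≤ u) (hu : u < uMax γ b₀) : u ^ 2 < sMax γ b₀ := by
  have hsMax : 0 < sMax γ b₀ := Real.sqrt_pos.1 (hu₀.trans_lt hu)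
  simpa [uMax, Real.sq_sqrt hsMax.le] using pow_lt_pow_left₀ hu hu₀ two_ne_zero

lemma cStar_sq (hγ : 1 < γ) (hb : 0 < 1 + (γ - 1) * b₀) :
    cStar γ b₀ ^ 2 = 2 * (1 + (γ - 1) * b₀) / (γ + 1) := by
  have : 0 < γ + 1 := by linarith
  exact Real.sq_sqrt (by positivity)

lemma cStar_lt_uMax (hγ : 1 < γ) (hb : 0 < 1 + (γ - 1) * b₀) :
    cStar γ b₀ < uMax γ b₀ := by
  have hγ₁ : 0 < γ - 1 := by linarith
  have hsMax : sMax γ b₀ = 2 * (1 + (γ - 1) * b₀) / (γ - 1) := by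
    unfold sMax
    field_simp
    ring
  refine Real.sqrt_lt_sqrt (by positivity) ?_
  rw [hsMax]
  exact div_lt_div_of_pos_left (by positivity) hγ₁ (by linarith)

lemma soundSq_sq_sub_sq (hγ : 1 < γ) (hb : 0 < 1 + (γ - 1) * b₀) (u : ℝ) :
    soundSq γ b₀ (u ^ 2) - u ^ 2 = (γ + 1) / 2 * (cStar γ b₀ ^ 2 - u ^ 2) := by
  have : γ + 1 ≠ 0 := by linarith
  rw [cStar_sq hγ hb]
  unfold soundSq
  field_simp
  ring

lemma enth_dens_add (hγ : 1 < γ) {s : ℝ} (hs : 0 ≤ soundSq γ b₀ s) :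
    enth γ (dens γ b₀ s) + s / 2 = b₀ := by
  have : γ - 1 ≠ 0 := by linarith
  show (((soundSq γ b₀ s) ^ (1 / (γ - 1))) ^ (γ - 1) - 1) / (γ - 1) + s / 2 = b₀
  rw [← Real.rpow_mul hs, one_div_mul_cancel this, Real.rpow_one]
  unfold soundSq
  field_simp
  ring

lemma dens_lt_dens (hγ : 1 < γ) {s t : ℝ} (hst : s < t) (ht : t < sMax γ b₀) :
    dens γ b₀ t < dens γ b₀ s := by
  have : 0 < γ - 1 := by linarith
  refine Real.rpow_lt_rpow (soundSq_pos hγ ht).le ?_ (by positivity)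
  rw [← soundSq, ← soundSq, soundSq_eq_mul_sMax_sub hγ, soundSq_eq_mul_sMax_sub hγ]
  nlinarith

lemma flux_pos (hγ : 1 < γ) {u : ℝ} (hu₀ : 0 < u) (hu : u < uMax γ b₀) :
    0 < flux γ b₀ u :=
  mul_pos (Real.rpow_pos_of_pos (soundSq_pos hγ (sq_lt_sMax hu₀.le hu)) _) hu₀

lemma hasDerivAt_flux (hγ : 1 < γ) (hb : 0 < 1 + (γ - 1) * b₀) {u : ℝ}
    (hA : 0 < soundSq γ b₀ (u ^ 2)) :
    HasDerivAt (flux γ b₀)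
      (soundSq γ b₀ (u ^ 2) ^ (1 / (γ - 1) - 1) * ((γ + 1) / 2 * (cStar γ b₀ ^ 2 - u ^ 2)))
      u := by
  have hγ₁ : γ - 1 ≠ 0 := by linarith
  have hsound : HasDerivAt (fun v => soundSq γ b₀ (v ^ 2)) (-((γ - 1) * u)) u := by
    refine ((((hasDerivAt_pow 2 u).div_const 2).const_sub b₀).const_mul (γ - 1)).const_add 1
      |>.congr_deriv ?_
    ring
  refine ((hsound.rpow_const (p := 1 / (γ - 1)) (Or.inl hA.ne')).mul (hasDerivAt_id u))
    |>.congr_deriv ?_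
  rw [← soundSq_sq_sub_sq hγ hb, id, Real.rpow_sub_one hA.ne']
  field_simp
  ring

lemma flux_continuousOn (hγ : 1 < γ) (hb : 0 < 1 + (γ - 1) * b₀) :
    ContinuousOn (flux γ b₀) (Ico 0 (uMax γ b₀)) := fun _ hu =>
  (hasDerivAt_flux hγ hb (soundSq_pos hγ (sq_lt_sMax hu.1 hu.2))).continuousAt.continuousWithinAt

lemma flux_strictMonoOn (hγ : 1 < γ) (hb : 0 < 1 + (γ - 1) * b₀) :
    StrictMonoOn (flux γ b₀) (Icc 0 (cStar γ b₀)) := by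
  have hsub : Icc 0 (cStar γ b₀) ⊆ Ico 0 (uMax γ b₀) :=
    Icc_subset_Ico_right (cStar_lt_uMax hγ hb)
  refine strictMonoOn_of_deriv_pos (convex_Icc _ _) ((flux_continuousOn hγ hb).mono hsub) ?_
  intro u hu
  rw [interior_Icc] at hu
  have hA := soundSq_pos hγ (sq_lt_sMax hu.1.le (hsub (Ioo_subset_Icc_self hu)).2)
  rw [(hasDerivAt_flux hγ hb hA).deriv]
  have : 0 < cStar γ b₀ ^ 2 - u ^ 2 := by nlinarith [hu.1, hu.2]
  have : 0 < γ + 1 := by linarith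
  positivity

lemma flux_strictAntiOn (hγ : 1 < γ) (hb : 0 < 1 + (γ - 1) * b₀) :
    StrictAntiOn (flux γ b₀) (Ico (cStar γ b₀) (uMax γ b₀)) := by
  have hc : 0 ≤ cStar γ b₀ := Real.sqrt_nonneg _
  have hsub : Ico (cStar γ b₀) (uMax γ b₀) ⊆ Ico 0 (uMax γ b₀) := Ico_subset_Ico_left hc
  refine strictAntiOn_of_deriv_neg (convex_Ico _ _) ((flux_continuousOn hγ hb).mono hsub) ?_
  intro u hu
  rw [interior_Ico] at hu
  have hA := soundSq_pos hγ (sq_lt_sMax (hc.trans hu.1.le) hu.2)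
  rw [(hasDerivAt_flux hγ hb hA).deriv]
  have hsupersonic : cStar γ b₀ ^ 2 - u ^ 2 < 0 := by nlinarith [hu.1]
  have : 0 < γ + 1 := by linarith
  exact mul_neg_of_pos_of_neg (Real.rpow_pos_of_pos hA _)
    (mul_neg_of_pos_of_neg (by positivity) hsupersonic)

end

theorem downstream_speed_exists_unique_general
    (γ b₀ uminus : ℝ) (hγ : 1 < γ)
    (hu : uminus ∈ Ioo (cStar γ b₀) (uMax γ b₀)) :
    (∃! uplus : ℝ, uplus ∈ Ioo 0 (cStar γ b₀) ∧
      dens γ b₀ (uplus ^ 2) * uplus = dens γ b₀ (uminus ^ 2) * uminus) ∧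
    (∀ uplus : ℝ, uplus ∈ Ioo 0 (cStar γ b₀) →
      dens γ b₀ (uplus ^ 2) * uplus = dens γ b₀ (uminus ^ 2) * uminus →
      enth γ (dens γ b₀ (uplus ^ 2)) + uplus ^ 2 / 2 = b₀ ∧
      enth γ (dens γ b₀ (uminus ^ 2)) + uminus ^ 2 / 2 = b₀ ∧
      uplus < cStar γ b₀ ∧ cStar γ b₀ < uminus ∧
      dens γ b₀ (uminus ^ 2) < dens γ b₀ (uplus ^ 2)) := by
  obtain ⟨hcu, huM⟩ := hu
  have hc : 0 ≤ cStar γ b₀ := Real.sqrt_nonneg _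
  -- `1 + (γ - 1) b₀` is the squared sound speed at rest.
  have hb : 0 < 1 + (γ - 1) * b₀ := by
    simpa [soundSq] using soundSq_pos hγ (sq_lt_sMax le_rfl (hc.trans_lt (hcu.trans huM)))
  have hu₀ : 0 < uminus := hc.trans_lt hcu
  have huminus : uminus ^ 2 < sMax γ b₀ := sq_lt_sMax hu₀.le huM
  have hflux_lt : flux γ b₀ uminus < flux γ b₀ (cStar γ b₀) :=
    flux_strictAntiOn hγ hb ⟨le_rfl, hcu.trans huM⟩ ⟨hcu.le, huM⟩ hcu
  have hflux_pos : flux γ b₀ 0 < flux γ b₀ uminus := by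
    simpa [flux] using flux_pos hγ hu₀ huM
  obtain ⟨uplus, hmem, hflux⟩ := intermediate_value_Ioo hc
    ((flux_continuousOn hγ hb).mono (Icc_subset_Ico_right (cStar_lt_uMax hγ hb)))
    ⟨hflux_pos, hflux_lt⟩
  refine ⟨⟨uplus, ⟨hmem, hflux⟩, fun v ⟨hv, hvflux⟩ => (flux_strictMonoOn hγ hb).injOn
    (Ioo_subset_Icc_self hv) (Ioo_subset_Icc_self hmem) (hvflux.trans hflux.symm)⟩, ?_⟩
  rintro v ⟨hv₀, hvc⟩ -
  have hvu : v ^ 2 < uminus ^ 2 := pow_lt_pow_left₀ (hvc.trans hcu) hv₀.le two_ne_zero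
  exact ⟨enth_dens_add hγ (soundSq_pos hγ (hvu.trans huminus)).le,
    enth_dens_add hγ (soundSq_pos hγ huminus).le, hvc, hcu, dens_lt_dens hγ hvu huminus⟩

/-- **Existence and uniqueness of the downstream speed** (Rankine–Hugoniot/Bernoulli
system): for `γ > 1`, `1 + (γ-1)b₀ > 0` and `u⁻ ∈ (c_*, u_max)`, there exists a unique
`u⁺ ∈ (0, c_*)` with `ρ((u⁺)²)u⁺ = ρ((u⁻)²)u⁻`; moreover the Bernoulli law
`i(ρ^±) + (u^±)²/2 = b₀` holds automatically, `u⁺ < c_* < u⁻`, and the entropy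
condition `ρ((u⁺)²) > ρ((u⁻)²)` holds. -/
theorem downstream_speed_exists_unique
    (γ b₀ uminus : ℝ) (hγ : 1 < γ) (hb : 0 < 1 + (γ - 1) * b₀)
    (hu : uminus ∈ Ioo (cStar γ b₀) (uMax γ b₀)) :
    (∃! uplus : ℝ, uplus ∈ Ioo 0 (cStar γ b₀) ∧
      dens γ b₀ (uplus ^ 2) * uplus = dens γ b₀ (uminus ^ 2) * uminus) ∧
    (∀ uplus : ℝ, uplus ∈ Ioo 0 (cStar γ b₀) →
      dens γ b₀ (uplus ^ 2) * uplus = dens γ b₀ (uminus ^ 2) * uminus →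
      enth γ (dens γ b₀ (uplus ^ 2)) + uplus ^ 2 / 2 = b₀ ∧
      enth γ (dens γ b₀ (uminus ^ 2)) + uminus ^ 2 / 2 = b₀ ∧
      uplus < cStar γ b₀ ∧ cStar γ b₀ < uminus ∧
      dens γ b₀ (uminus ^ 2) < dens γ b₀ (uplus ^ 2)) :=
  downstream_speed_exists_unique_general γ b₀ uminus hγ hu
end
end

section
/- The isothermal case γ = 1: with ρ(s) := e^{b₀ − s/2} (so the critical speed is c_* = 1), the mass flux m(u) := u·e^{b₀ − u²/2} is strictly increasing on [0, 1] and strictly decreasing on [1, ∞); consequently, for every u⁻ > 1 there exists a unique u⁺ ∈ (0,1) such that u⁺·e^{−(u⁺)²/2} = u⁻·e^{−(u⁻)²/2}, and it satisfies ρ((u⁺)²) > ρ((u⁻)²). -/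
open Set

/-
The flux `m(u) = u e^{b - u²/2}` has derivative `(1 - u²) e^{b - u²/2}`, positive on `(0, 1)` and
negative on `(1, ∞)`. For `u⁻ > 1` the value `m(u⁻)` lies strictly between `m(0) = 0` and the
maximum `m(1)`, so the intermediate value theorem and injectivity on `[0, 1]` give the unique
subsonic `u⁺`; the equation for `u⁺` is the case `b₀ = 0`, as the factor `e^{b₀}` cancels.
The density inequality is just `(u⁺)² < 1 < (u⁻)²`.
-/

namespace Isothermal

noncomputable def flux (b u : ℝ) : ℝ := u * Real.exp (b - u ^ 2 / 2)

lemma flux_zero_left (u : ℝ) : flux 0 u = u * Real.exp (-(u ^ 2) / 2) := by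
  simp only [flux, zero_sub, neg_div]

lemma hasDerivAt_flux (b u : ℝ) :
    HasDerivAt (flux b) ((1 - u ^ 2) * Real.exp (b - u ^ 2 / 2)) u := by
  have hexp : HasDerivAt (fun u : ℝ => Real.exp (b - u ^ 2 / 2))
      (Real.exp (b - u ^ 2 / 2) * -u) u := by
    simpa using (((hasDerivAt_pow 2 u).div_const 2).const_sub b).exp
  exact ((hasDerivAt_id' u).mul hexp).congr_deriv (by ring)

lemma continuous_flux (b : ℝ) : Continuous (flux b) :=
  continuous_iff_continuousAt.2 fun u => (hasDerivAt_flux b u).continuousAt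

lemma flux_strictMonoOn (b : ℝ) : StrictMonoOn (flux b) (Icc 0 1) := by
  refine strictMonoOn_of_deriv_pos (convex_Icc 0 1) (continuous_flux b).continuousOn ?_
  intro u hu
  rw [interior_Icc] at hu
  rw [(hasDerivAt_flux b u).deriv]
  have : 0 < 1 - u ^ 2 := by nlinarith [hu.1, hu.2]
  positivity

lemma flux_strictAntiOn (b : ℝ) : StrictAntiOn (flux b) (Ici 1) := by
  refine strictAntiOn_of_deriv_neg (convex_Ici 1) (continuous_flux b).continuousOn ?_
  intro u hu
  rw [interior_Ici] at hu
  rw [(hasDerivAt_flux b u).deriv]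
  have : 1 - u ^ 2 < 0 := by nlinarith [mem_Ioi.1 hu]
  exact mul_neg_of_neg_of_pos this (Real.exp_pos _)

lemma existsUnique_subsonic_flux_eq (b : ℝ) {v : ℝ} (hv : 1 < v) :
    ∃! u, u ∈ Ioo 0 1 ∧ flux b u = flux b v := by
  have hv_mem : flux b v ∈ Ioo (flux b 0) (flux b 1) := by
    refine ⟨?_, flux_strictAntiOn b self_mem_Ici hv.le hv⟩
    have : 0 < v := one_pos.trans hv
    simp only [flux, zero_mul]
    positivity
  obtain ⟨u, hu, hu_eq⟩ :=
    intermediate_value_Ioo zero_le_one (continuous_flux b).continuousOn hv_mem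
  refine ⟨u, ⟨hu, hu_eq⟩, fun w ⟨hw, hw_eq⟩ => ?_⟩
  exact (flux_strictMonoOn b).injOn (Ioo_subset_Icc_self hw) (Ioo_subset_Icc_self hu)
    (hw_eq.trans hu_eq.symm)

end Isothermal

/-- **The isothermal case `γ = 1`**: with density `ρ(s) = e^{b₀ - s/2}` (so that the
critical speed is `c_* = 1`), the mass flux `m(u) = u·e^{b₀ - u²/2}` is strictly
increasing on `[0,1]` and strictly decreasing on `[1,∞)`; consequently, for every
`u⁻ > 1` there is a unique `u⁺ ∈ (0,1)` with `u⁺e^{-(u⁺)²/2} = u⁻e^{-(u⁻)²/2}`,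
and it satisfies the entropy condition `ρ((u⁺)²) > ρ((u⁻)²)`. -/
theorem isothermal_mass_flux_and_downstream_speed (b₀ : ℝ) :
    StrictMonoOn (fun u => u * Real.exp (b₀ - u ^ 2 / 2)) (Icc (0:ℝ) 1) ∧
    StrictAntiOn (fun u => u * Real.exp (b₀ - u ^ 2 / 2)) (Ici (1:ℝ)) ∧
    (∀ uminus : ℝ, 1 < uminus →
      (∃! uplus : ℝ, uplus ∈ Ioo (0:ℝ) 1 ∧
        uplus * Real.exp (-(uplus ^ 2) / 2) = uminus * Real.exp (-(uminus ^ 2) / 2)) ∧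
      (∀ uplus : ℝ, uplus ∈ Ioo (0:ℝ) 1 →
        uplus * Real.exp (-(uplus ^ 2) / 2) = uminus * Real.exp (-(uminus ^ 2) / 2) →
        Real.exp (b₀ - uminus ^ 2 / 2) < Real.exp (b₀ - uplus ^ 2 / 2))) := by
  refine ⟨Isothermal.flux_strictMonoOn b₀, Isothermal.flux_strictAntiOn b₀,
    fun uminus hminus => ⟨?_, ?_⟩⟩
  · simpa only [Isothermal.flux_zero_left] using
      Isothermal.existsUnique_subsonic_flux_eq 0 hminus
  · rintro uplus ⟨hplus₀, hplus₁⟩ -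
    rw [Real.exp_lt_exp]
    nlinarith
end
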